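/- Let G be a finite group. If G is not cyclic, then m_{G,G} = 0; if G is cyclic of order n, then m_{G,G} = φ(n)/n, where φ is the Euler totient function. In particular, m_{G,G} = 0 if and only if G is not cyclic. -/

import Mathlib

/-!
Every element `g` contributes `μ(X, G)` to `|X| μ(X, G)` for each subgroup `X ⊇ ⟨g⟩`, and by
Möbius inversion these contributions add up to `1` when `⟨g⟩ = G` and to `0` otherwise. Hence
`|G| · m_{G,G}` is the number of generators of `G`: none if `G` is not cyclic, `φ(|G|)` if it is.
-/

open scoped Classical Pointwise

noncomputable instance (G : Type*) [Group G] [Finite G] : Fintype (Subgroup G) :=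
  Fintype.ofFinite _

/-- The Möbius function of the subgroup lattice of a finite group `G`, defined as the
matrix inverse of the zeta matrix whose `(K, D)` entry is `1` if `K ≤ D` and `0` otherwise. -/
noncomputable def subgroupMu (G : Type*) [Group G] [Finite G] :
    Matrix (Subgroup G) (Subgroup G) ℚ :=
  (Matrix.of fun K D : Subgroup G => if K ≤ D then (1 : ℚ) else 0)⁻¹

/-- `m_{G,N} = (1/|G|) · Σ_{X ≤ G, XN = G} |X| · μ(X, G)`. -/
noncomputable def mGN (G : Type*) [Group G] [Finite G] (N : Subgroup G) : ℚ :=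
  (1 / (Nat.card G : ℚ)) *
    ∑ X : Subgroup G,
      if (X : Set G) * (N : Set G) = (Set.univ : Set G)
      then (Nat.card X : ℚ) * subgroupMu G X ⊤ else 0

open Finset IncidenceAlgebra

section MobiusInversion

variable {𝕜 α β : Type*} [Ring 𝕜] [PartialOrder α] [Fintype α] [LocallyFiniteOrder α]

theorem sum_ite_le_mu (a b : α) :
    ∑ x, (if a ≤ x then mu 𝕜 x b else 0) = if a = b then 1 else 0 := by
  rw [← sum_filter, ← sum_Icc_mu_left a b]
  refine (sum_subset (fun x hx => by simpa using (mem_Icc.1 hx).1) fun x _ hx => ?_).symm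
  refine apply_eq_zero_of_not_le (fun hxb => hx ?_) _
  simp_all

theorem inv_zeta_matrix_eq_mu {R : Type*} [CommRing R] :
    (Matrix.of fun a b : α => if a ≤ b then (1 : R) else 0)⁻¹ = Matrix.of (mu R : α → α → R) := by
  refine Matrix.inv_eq_right_inv (Matrix.ext fun a b => ?_)
  simpa [Matrix.mul_apply, Matrix.one_apply] using sum_ite_le_mu a b

theorem sum_card_le_mul_mu [Fintype β] (f : β → α) (b : α) :
    ∑ a, (#{x | f x ≤ a} : 𝕜) * mu 𝕜 a b = #{x | f x = b} := by
  simp only [card_filter, Nat.cast_sum, Nat.cast_ite, Nat.cast_one, Nat.cast_zero, sum_mul,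
    ite_mul, one_mul, zero_mul]
  rw [sum_comm]
  exact sum_congr rfl fun x _ => sum_ite_le_mu (f x) b

end MobiusInversion

section SubgroupLattice

variable {G : Type*} [Group G]

open Subgroup

theorem Subgroup.card_eq_card_filter_zpowers_le [Fintype G] (X : Subgroup G) :
    Nat.card X = #{g : G | zpowers g ≤ X} := by
  simp only [zpowers_le, Nat.card_eq_fintype_card, Fintype.card_subtype]

theorem sum_card_mul_subgroupMu_top [Finite G] :
    ∑ X : Subgroup G, (Nat.card X : ℚ) * subgroupMu G X ⊤ = Nat.card {g : G // zpowers g = ⊤} := by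
  have := Fintype.ofFinite G
  let : LocallyFiniteOrder (Subgroup G) := Fintype.toLocallyFiniteOrder
  have hmu : subgroupMu G = Matrix.of (mu ℚ) := inv_zeta_matrix_eq_mu
  calc ∑ X : Subgroup G, (Nat.card X : ℚ) * subgroupMu G X ⊤
      = ∑ X : Subgroup G, (#{g : G | zpowers g ≤ X} : ℚ) * mu ℚ X ⊤ := by
        simp only [card_eq_card_filter_zpowers_le, hmu, Matrix.of_apply]
    _ = #{g : G | zpowers g = ⊤} := sum_card_le_mul_mu _ ⊤
    _ = Nat.card {g : G // zpowers g = ⊤} := by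
        rw [Nat.card_eq_fintype_card, Fintype.card_subtype]

theorem mGN_top_eq [Finite G] :
    mGN G ⊤ = Nat.card {g : G // zpowers g = ⊤} / Nat.card G := by
  have hXG (X : Subgroup G) : (X : Set G) * ((⊤ : Subgroup G) : Set G) = Set.univ := by
    rw [coe_top]
    exact Set.mul_univ ⟨1, X.one_mem⟩
  simp only [mGN, hXG, if_true, sum_card_mul_subgroupMu_top, one_div_mul_eq_div]

theorem card_zpowers_eq_top_of_not_isCyclic (hG : ¬IsCyclic G) :
    Nat.card {g : G // zpowers g = ⊤} = 0 :=
  Nat.card_eq_zero.2 <| .inl ⟨fun g => hG (isCyclic_iff_exists_zpowers_eq_top.2 ⟨g, g.2⟩)⟩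

theorem IsCyclic.card_zpowers_eq_top [Finite G] [IsCyclic G] :
    Nat.card {g : G // zpowers g = ⊤} = Nat.totient (Nat.card G) := by
  have := Fintype.ofFinite G
  have hgen (g : G) : zpowers g = ⊤ ↔ orderOf g = Fintype.card G := by
    rw [← card_eq_iff_eq_top, Nat.card_zpowers, Nat.card_eq_fintype_card]
  simp only [hgen, Nat.card_eq_fintype_card, Fintype.card_subtype]
  exact IsCyclic.card_orderOf_eq_totient dvd_rfl

end SubgroupLattice

/-- If `G` is not cyclic then `m_{G,G} = 0`; if `G` is cyclic of order `n` then
`m_{G,G} = φ(n)/n`. In particular `m_{G,G} = 0` iff `G` is not cyclic. -/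
theorem mGN_top (G : Type*) [Group G] [Finite G] :
    (¬ IsCyclic G → mGN G (⊤ : Subgroup G) = 0) ∧
    (IsCyclic G →
      mGN G (⊤ : Subgroup G) = (Nat.totient (Nat.card G) : ℚ) / (Nat.card G : ℚ)) ∧
    (mGN G (⊤ : Subgroup G) = 0 ↔ ¬ IsCyclic G) := by
  have hnot (hG : ¬IsCyclic G) : mGN G ⊤ = 0 := by
    rw [mGN_top_eq, card_zpowers_eq_top_of_not_isCyclic hG, Nat.cast_zero, zero_div]
  have hcyc (hG : IsCyclic G) : mGN G ⊤ = Nat.totient (Nat.card G) / Nat.card G := by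
    rw [mGN_top_eq, IsCyclic.card_zpowers_eq_top]
  refine ⟨hnot, hcyc, fun h0 hG => ?_, hnot⟩
  have hn : 0 < Nat.card G := Nat.card_pos
  have hpos : (0 : ℚ) < Nat.totient (Nat.card G) / Nat.card G := by
    have := Nat.totient_pos.2 hn
    positivity
  exact hpos.ne' ((hcyc hG).symm.trans h0)
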